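/- arXiv:1711.06544 — 5 statements merged into one kernel-verified Lean document; each statement's English description precedes it below -/
import Mathlib

section
/- Let n ≥ 2 and let f : (0,1) → [0,1]^n be any function. Define G = ⋃_{t ∈ (0,1)} {y ∈ ℝ^n : ‖y − f(t)‖_∞ = t/2}. Then the lower box dimension of G is at least n − 1/2. -/
open Set Metric MeasureTheory Filter Topology
open scoped ENNReal

/-- Minimal number of closed balls of radius `r` needed to cover `F`. -/
noncomputable def coverNum {X : Type*} [PseudoMetricSpace X] (F : Set X) (r : ℝ) : ℕ :=
  sInf {m : ℕ | ∃ s : Finset X, s.card = m ∧ F ⊆ ⋃ x ∈ s, closedBall x r}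

/-- Lower box(-counting) dimension. -/
noncomputable def lowerBoxDim {X : Type*} [PseudoMetricSpace X] (F : Set X) : ℝ :=
  liminf (fun r : ℝ => Real.log (coverNum F r) / (- Real.log r)) (𝓝[>] 0)

/-- Upper box(-counting) dimension. -/
noncomputable def upperBoxDim {X : Type*} [PseudoMetricSpace X] (F : Set X) : ℝ :=
  limsup (fun r : ℝ => Real.log (coverNum F r) / (- Real.log r)) (𝓝[>] 0)

/-- Assouad dimension. -/
noncomputable def assouadDim {X : Type*} [PseudoMetricSpace X] (F : Set X) : ℝ :=
  sInf {s : ℝ | 0 ≤ s ∧ ∃ C > 0, ∀ x ∈ F, ∀ R > 0, ∀ r : ℝ, 0 < r → r < R →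
    (coverNum (F ∩ closedBall x R) r : ℝ) ≤ C * (R / r) ^ s}

/-!
Fix `r` and the `K ≈ 1/(16 r)` side lengths `t_j = 1/2 + 8 r j`, `j < K`. On each of the two
faces `x₀ = f(t_j)₀ ± t_j/2` of the `j`-th cube pick a grid of `K^(n-1)` points of spacing `4 r`.
Given a cover of `G` by `N` balls of radius `r`, send a pair (point of the `+` face, point of the
`-` face) of the same cube to the pair of balls containing them. This is injective: the two balls
determine the gap `t_j` between the faces up to `4 r`, hence `j`, and then both grid points. So
`K^(2n-1) ≤ N²`, i.e. `N_r(G) ≳ r^(-(n-1/2))`. The crude bound `N_r(G) ≲ r^(-n)` is also needed: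
`liminf` in `ℝ` is a junk value unless the ratio is bounded above.
-/

theorem Nat.eq_of_abs_mul_sub_mul_lt {δ : ℝ} (hδ : 0 < δ) {a b : ℕ}
    (h : |δ * a - δ * b| < δ) : a = b := by
  rw [← mul_sub, abs_mul, abs_of_pos hδ, mul_lt_iff_lt_one_right hδ] at h
  have : |(a : ℤ) - b| < 1 := by exact_mod_cast h
  rw [abs_lt] at this
  omega

theorem Fintype.card_le_card_of_separated_of_cover {ι X : Type*} [Fintype ι]
    [PseudoMetricSpace X] {p : ι → X} {s : Finset X} {r : ℝ}
    (hsep : ∀ i j, dist (p i) (p j) ≤ 2 * r → i = j)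
    (hcov : ∀ i, ∃ x ∈ s, dist (p i) x ≤ r) :
    Fintype.card ι ≤ s.card := by
  classical
  choose g hgs hg using hcov
  rw [← Finset.card_univ]
  refine Finset.card_le_card_of_injOn g (fun i _ => hgs i) fun i _ j _ hij => hsep i j ?_
  calc dist (p i) (p j) ≤ dist (p i) (g i) + dist (p j) (g i) := dist_triangle_right _ _ _
    _ ≤ 2 * r := by linarith [hg i, hij ▸ hg j]

theorem Real.rpow_div_two_le_of_pow_le_sq {a N : ℝ} (ha : 0 ≤ a) (hN : 0 ≤ N) {k : ℕ}
    (h : a ^ k ≤ N ^ 2) : a ^ ((k : ℝ) / 2) ≤ N :=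
  calc a ^ ((k : ℝ) / 2) = √(a ^ k) := by
        rw [Real.sqrt_eq_rpow, ← Real.rpow_natCast, ← Real.rpow_mul ha, mul_one_div]
    _ ≤ √(N ^ 2) := Real.sqrt_le_sqrt h
    _ = N := Real.sqrt_sq hN

theorem norm_finCons_eq {m : ℕ} {a : ℝ} {u : Fin m → ℝ} (hu : ‖u‖ ≤ |a|) :
    ‖(Fin.cons a u : Fin (m + 1) → ℝ)‖ = |a| := by
  refine le_antisymm ((pi_norm_le_iff_of_nonneg (abs_nonneg a)).2 fun k => ?_) ?_
  · refine Fin.cases (by simp) (fun k => ?_) k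
    simpa using (norm_le_pi_norm u k).trans hu
  · simpa using norm_le_pi_norm (Fin.cons a u : Fin (m + 1) → ℝ) 0

section CoverNum

variable {X : Type*} [PseudoMetricSpace X] {F : Set X} {r : ℝ}

theorem coverNum_le_card {s : Finset X} (hs : F ⊆ ⋃ x ∈ s, closedBall x r) :
    coverNum F r ≤ s.card :=
  Nat.sInf_le ⟨s, rfl, hs⟩

theorem exists_card_eq_coverNum (hF : ∃ s : Finset X, F ⊆ ⋃ x ∈ s, closedBall x r) :
    ∃ s : Finset X, s.card = coverNum F r ∧ F ⊆ ⋃ x ∈ s, closedBall x r :=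
  Nat.sInf_mem (s := {m | ∃ s : Finset X, s.card = m ∧ F ⊆ ⋃ x ∈ s, closedBall x r})
    (let ⟨s, hs⟩ := hF; ⟨s.card, s, rfl, hs⟩)

end CoverNum

theorem exists_grid_point_abs_sub_le {R r x : ℝ} (hr : 0 < r) (hx : |x| ≤ R) :
    ∃ k < ⌊R / r⌋₊ + 1, |x - (2 * r * k + r - R)| ≤ r := by
  obtain ⟨hxl, hxu⟩ := abs_le.1 hx
  have hnonneg : 0 ≤ (x + R) / (2 * r) := div_nonneg (by linarith) (by positivity)
  refine ⟨⌊(x + R) / (2 * r)⌋₊, Nat.lt_succ_of_le (Nat.floor_mono ?_), abs_le.2 ⟨?_, ?_⟩⟩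
  · rw [div_le_div_iff₀ (by positivity) hr]
    nlinarith
  · have := Nat.floor_le hnonneg
    rw [le_div_iff₀ (by positivity)] at this
    linarith
  · have := Nat.lt_floor_add_one ((x + R) / (2 * r))
    rw [div_lt_iff₀ (by positivity)] at this
    linarith

theorem exists_finset_card_le_of_subset_closedBall {n : ℕ} {F : Set (Fin n → ℝ)} {R r : ℝ}
    (hr : 0 < r) (hF : F ⊆ closedBall 0 R) :
    ∃ s : Finset (Fin n → ℝ), F ⊆ ⋃ x ∈ s, closedBall x r ∧ s.card ≤ (⌊R / r⌋₊ + 1) ^ n := by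
  classical
  let center : (Fin n → ℕ) → Fin n → ℝ := fun z i => 2 * r * z i + r - R
  refine ⟨(Fintype.piFinset fun _ => Finset.range (⌊R / r⌋₊ + 1)).image center, ?_, ?_⟩
  · intro y hy
    have hyi : ∀ i, |y i| ≤ R := fun i =>
      (norm_le_pi_norm y i).trans (by simpa using mem_closedBall_zero_iff.1 (hF hy))
    choose z hz hyz using fun i => exists_grid_point_abs_sub_le hr (hyi i)
    refine mem_iUnion₂.2 ⟨center z, Finset.mem_image_of_mem _ ?_, ?_⟩
    · simpa [Fintype.mem_piFinset] using hz
    · rw [mem_closedBall, dist_pi_le_iff hr.le]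
      exact fun i => (Real.dist_eq _ _).trans_le (hyz i)
  · refine Finset.card_image_le.trans ?_
    simp

theorem coverNum_le_of_subset_closedBall {n : ℕ} {F : Set (Fin n → ℝ)} {R r : ℝ}
    (hr : 0 < r) (hrR : r ≤ R) (hF : F ⊆ closedBall 0 R) :
    (coverNum F r : ℝ) ≤ (2 * R / r) ^ n := by
  obtain ⟨s, hs, hcard⟩ := exists_finset_card_le_of_subset_closedBall hr hF
  have hfloor : (⌊R / r⌋₊ : ℝ) + 1 ≤ 2 * R / r := by
    have := Nat.floor_le (div_nonneg (hr.le.trans hrR) hr.le)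
    have : 1 ≤ R / r := (one_le_div hr).2 hrR
    linarith [show 2 * R / r = R / r + R / r by ring]
  calc (coverNum F r : ℝ) ≤ s.card := by exact_mod_cast coverNum_le_card hs
    _ ≤ ((⌊R / r⌋₊ : ℝ) + 1) ^ n := by exact_mod_cast hcard
    _ ≤ (2 * R / r) ^ n := by gcongr

theorem exists_card_eq_coverNum_of_isBounded {n : ℕ} {F : Set (Fin n → ℝ)} {r : ℝ}
    (hF : Bornology.IsBounded F) (hr : 0 < r) :
    ∃ s : Finset (Fin n → ℝ), s.card = coverNum F r ∧ F ⊆ ⋃ x ∈ s, closedBall x r := by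
  obtain ⟨R, hR⟩ := hF.subset_closedBall 0
  obtain ⟨s, hs, -⟩ := exists_finset_card_le_of_subset_closedBall hr hR
  exact exists_card_eq_coverNum ⟨s, hs⟩

theorem tendsto_log_div_div_neg_log {a : ℝ} (ha : 0 < a) :
    Tendsto (fun r => Real.log (a / r) / -Real.log r) (𝓝[>] 0) (𝓝 1) := by
  have hlog : Tendsto (fun r => -Real.log r) (𝓝[>] 0) atTop :=
    tendsto_neg_atBot_atTop.comp Real.tendsto_log_nhdsGT_zero
  have hsum : Tendsto (fun r => 1 + Real.log a / -Real.log r) (𝓝[>] 0) (𝓝 1) := by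
    simpa using tendsto_const_nhds.add (tendsto_const_nhds.div_atTop hlog)
  refine hsum.congr' ?_
  filter_upwards [Ioo_mem_nhdsGT zero_lt_one] with r ⟨hr, hr1⟩
  have : -Real.log r ≠ 0 := (neg_pos.2 (Real.log_neg hr hr1)).ne'
  rw [Real.log_div ha.ne' hr.ne', sub_eq_add_neg, add_div, div_self this, add_comm]

theorem le_lowerBoxDim_of_coverNum_bounds {X : Type*} [PseudoMetricSpace X] {F : Set X}
    {c C d D : ℝ} (hc : 0 < c) (hC : 0 < C)
    (hlow : ∀ᶠ r in 𝓝[>] 0, (c / r) ^ d ≤ (coverNum F r : ℝ))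
    (hup : ∀ᶠ r in 𝓝[>] 0, (coverNum F r : ℝ) ≤ (C / r) ^ D) :
    d ≤ lowerBoxDim F := by
  have hbounds : ∀ᶠ r in 𝓝[>] 0,
      d * (Real.log (c / r) / -Real.log r) ≤ Real.log (coverNum F r) / -Real.log r ∧
      Real.log (coverNum F r) / -Real.log r ≤ D * (Real.log (C / r) / -Real.log r) := by
    filter_upwards [hlow, hup, Ioo_mem_nhdsGT zero_lt_one] with r hlow hup ⟨hr, hr1⟩
    have hpos : 0 < -Real.log r := neg_pos.2 (Real.log_neg hr hr1)
    have hcr : 0 < (c / r) ^ d := by positivity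
    simp only [← mul_div_assoc, ← Real.log_rpow (div_pos hc hr), ← Real.log_rpow (div_pos hC hr)]
    exact ⟨div_le_div_of_nonneg_right (Real.log_le_log hcr hlow) hpos.le,
      div_le_div_of_nonneg_right (Real.log_le_log (hcr.trans_le hlow) hup) hpos.le⟩
  have hd := (tendsto_log_div_div_neg_log hc).const_mul d
  have hD := (tendsto_log_div_div_neg_log hC).const_mul D
  rw [mul_one] at hd hD
  calc d = liminf (fun r => d * (Real.log (c / r) / -Real.log r)) (𝓝[>] 0) := hd.liminf_eq.symm
    _ ≤ lowerBoxDim F :=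
      liminf_le_liminf (hbounds.mono fun _ => And.left) hd.isBoundedUnder_ge
        (hD.isBoundedUnder_le.mono_le (hbounds.mono fun _ => And.right)).isCoboundedUnder_ge

section FaceGridPoint

variable {m L : ℕ}

def faceGridPoint (c : Fin (m + 1) → ℝ) (a δ : ℝ) (v : Fin m → Fin L) : Fin (m + 1) → ℝ :=
  c + Fin.cons a fun k => δ * (v k : ℕ)

theorem faceGridPoint_mem_sphere (c : Fin (m + 1) → ℝ) {a δ : ℝ} (hδ : 0 ≤ δ)
    (hL : δ * L ≤ |a|) (v : Fin m → Fin L) : faceGridPoint c a δ v ∈ sphere c |a| := by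
  rw [mem_sphere_iff_norm, faceGridPoint, add_sub_cancel_left]
  refine norm_finCons_eq ((pi_norm_le_iff_of_nonneg (abs_nonneg a)).2 fun k => ?_)
  rw [Real.norm_eq_abs, abs_of_nonneg (by positivity)]
  exact le_trans (by gcongr; exact (v k).isLt.le) hL

theorem abs_sub_le_of_dist_faceGridPoint_le {c c' : Fin (m + 1) → ℝ} {a a' δ δ' ε : ℝ}
    {v v' : Fin m → Fin L} (h : dist (faceGridPoint c a δ v) (faceGridPoint c' a' δ' v') ≤ ε) :
    |c 0 + a - (c' 0 + a')| ≤ ε := by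
  simpa [faceGridPoint, Real.dist_eq] using (dist_le_pi_dist _ _ 0).trans h

theorem eq_of_dist_faceGridPoint_lt {c : Fin (m + 1) → ℝ} {a δ : ℝ} (hδ : 0 < δ)
    {v v' : Fin m → Fin L} (h : dist (faceGridPoint c a δ v) (faceGridPoint c a δ v') < δ) :
    v = v' := by
  funext k
  refine Fin.ext (Nat.eq_of_abs_mul_sub_mul_lt hδ ?_)
  simpa [faceGridPoint, Real.dist_eq] using (dist_le_pi_dist _ _ k.succ).trans_lt h

end FaceGridPoint

theorem card_mul_pow_le_sq_card_of_sphere_subset {ι : Type*} [Fintype ι] {m L : ℕ} {r : ℝ}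
    (hr : 0 < r) {c : ι → Fin (m + 1) → ℝ} {ρ : ι → ℝ} (hρL : ∀ i, 4 * r * L ≤ ρ i)
    (hρ : ∀ i j, |ρ i - ρ j| ≤ 2 * r → i = j) {s : Finset (Fin (m + 1) → ℝ)}
    (hs : ∀ i, sphere (c i) (ρ i) ⊆ ⋃ x ∈ s, closedBall x r) :
    Fintype.card ι * L ^ (2 * m) ≤ s.card ^ 2 := by
  have hρ0 : ∀ i, 0 ≤ ρ i := fun i => (by positivity : 0 ≤ 4 * r * L).trans (hρL i)
  have hnear : ∀ i a (v : Fin m → Fin L), |a| = ρ i →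
      ∃ x ∈ s, dist (faceGridPoint (c i) a (4 * r) v) x ≤ r := fun i a v ha => by
    simpa [mem_iUnion₂, mem_closedBall] using
      hs i (ha ▸ faceGridPoint_mem_sphere (c i) (by positivity) (ha ▸ hρL i) v)
  let p : ι × (Fin m → Fin L) × (Fin m → Fin L) → (Fin (m + 1) → ℝ) × (Fin (m + 1) → ℝ) :=
    fun x => (faceGridPoint (c x.1) (ρ x.1) (4 * r) x.2.1,
      faceGridPoint (c x.1) (-ρ x.1) (4 * r) x.2.2)
  have hcard : Fintype.card (ι × (Fin m → Fin L) × (Fin m → Fin L)) ≤ (s ×ˢ s).card := by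
    refine Fintype.card_le_card_of_separated_of_cover (p := p) (r := r) ?_ ?_
    · rintro ⟨i, v, w⟩ ⟨j, v', w'⟩ h
      rw [Prod.dist_eq, max_le_iff] at h
      have h₁ := abs_le.1 (abs_sub_le_of_dist_faceGridPoint_le h.1)
      have h₂ := abs_le.1 (abs_sub_le_of_dist_faceGridPoint_le h.2)
      obtain rfl : i = j := hρ i j (abs_le.2 ⟨by linarith, by linarith⟩)
      obtain rfl := eq_of_dist_faceGridPoint_lt (by positivity) (h.1.trans_lt (by linarith))
      obtain rfl := eq_of_dist_faceGridPoint_lt (by positivity) (h.2.trans_lt (by linarith))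
      rfl
    · rintro ⟨i, v, w⟩
      obtain ⟨x, hx, hvx⟩ := hnear i _ v (abs_of_nonneg (hρ0 i))
      obtain ⟨y, hy, hwy⟩ := hnear i _ w (by rw [abs_neg, abs_of_nonneg (hρ0 i)])
      exact ⟨(x, y), Finset.mem_product.2 ⟨hx, hy⟩, Prod.dist_eq.trans_le (max_le hvx hwy)⟩
  simpa [Fintype.card_prod, Fintype.card_fun, Finset.card_product, ← pow_add, two_mul, sq]
    using hcard

theorem rpow_le_coverNum_of_sphere_subset {m : ℕ} {F : Set (Fin (m + 1) → ℝ)}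
    (hF : Bornology.IsBounded F) {f : ℝ → Fin (m + 1) → ℝ}
    (hsph : ∀ t ∈ Ioo (0 : ℝ) 1, sphere (f t) (t / 2) ⊆ F) {r : ℝ} (hr : 0 < r)
    (hr' : r ≤ 1 / 32) :
    (1 / 32 / r) ^ ((m : ℝ) + 1 / 2) ≤ coverNum F r := by
  obtain ⟨s, hs, hFs⟩ := exists_card_eq_coverNum_of_isBounded hF hr
  set K := ⌊1 / (16 * r)⌋₊
  have hK : K * (16 * r) ≤ 1 := (le_div_iff₀ (by positivity)).1 (Nat.floor_le (by positivity))
  have hKr : 1 / 32 / r ≤ K := by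
    have h1 : 1 ≤ 1 / 32 / r := by rw [le_div_iff₀ hr]; linarith
    have h2 : 1 / (16 * r) = 2 * (1 / 32 / r) := by field_simp; norm_num
    linarith [Nat.sub_one_lt_floor (1 / (16 * r))]
  have hpack : K ^ (2 * m + 1) ≤ s.card ^ 2 := by
    rw [pow_succ']
    nth_rewrite 1 [← Fintype.card_fin K]
    refine card_mul_pow_le_sq_card_of_sphere_subset (ι := Fin K) (L := K) hr
      (c := fun j => f (1 / 2 + 8 * r * j)) (ρ := fun j => (1 / 2 + 8 * r * j) / 2) ?_ ?_ ?_
    · intro j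
      have : 0 ≤ r * j := by positivity
      linarith
    · refine fun i j h => Fin.ext (Nat.eq_of_abs_mul_sub_mul_lt (δ := 4 * r) (by positivity) ?_)
      calc |4 * r * i - 4 * r * j| = |(1 / 2 + 8 * r * i) / 2 - (1 / 2 + 8 * r * j) / 2| := by
            ring_nf
        _ < 4 * r := by linarith
    · intro j
      have hj : r * j < r * K := by gcongr; exact_mod_cast j.isLt
      exact (hsph _ ⟨by positivity, by linarith⟩).trans hFs
  rw [← hs]
  have hpow : (1 / 32 / r) ^ (2 * m + 1) ≤ (s.card : ℝ) ^ 2 :=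
    (pow_le_pow_left₀ (by positivity) hKr _).trans (by exact_mod_cast hpack)
  convert Real.rpow_div_two_le_of_pow_le_sq (by positivity) (Nat.cast_nonneg _) hpow using 2
  push_cast
  ring

theorem iUnion_sphere_subset_closedBall_two {n : ℕ} {f : ℝ → Fin n → ℝ}
    (hf : ∀ t ∈ Ioo (0 : ℝ) 1, ∀ i, f t i ∈ Icc (0 : ℝ) 1) :
    (⋃ t ∈ Ioo (0 : ℝ) 1, {y : Fin n → ℝ | ‖y - f t‖ = t / 2}) ⊆ closedBall 0 2 := by
  intro y hy
  obtain ⟨t, ht, hyt : ‖y - f t‖ = t / 2⟩ := mem_iUnion₂.1 hy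
  have hft : ‖f t‖ ≤ 1 := (pi_norm_le_iff_of_nonneg zero_le_one).2 fun i => by
    rw [Real.norm_eq_abs, abs_le]
    exact ⟨by linarith [(hf t ht i).1], (hf t ht i).2⟩
  rw [mem_closedBall_zero_iff]
  linarith [norm_le_norm_add_norm_sub' y (f t), ht.2]

/-- Any set containing boundaries of axis-aligned cubes of all side
lengths in `(0,1)` has lower box dimension at least `n - 1/2`. -/
theorem cube_packing_lowerBoxDim_ge (n : ℕ) (hn : 2 ≤ n) (f : ℝ → (Fin n → ℝ))
    (hf : ∀ t ∈ Set.Ioo (0:ℝ) 1, ∀ i, f t i ∈ Set.Icc (0:ℝ) 1) :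
    (n : ℝ) - 1/2 ≤
      lowerBoxDim (⋃ t ∈ Set.Ioo (0:ℝ) 1, {y : Fin n → ℝ | ‖y - f t‖ = t / 2}) := by
  obtain ⟨m, rfl⟩ : ∃ m, n = m + 1 := ⟨n - 1, by omega⟩
  have hG := iUnion_sphere_subset_closedBall_two hf
  have hsph : ∀ t ∈ Ioo (0 : ℝ) 1,
      sphere (f t) (t / 2) ⊆ ⋃ t ∈ Ioo (0 : ℝ) 1, {y | ‖y - f t‖ = t / 2} :=
    fun t ht y hy => mem_biUnion ht (mem_sphere_iff_norm.1 hy)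
  refine le_lowerBoxDim_of_coverNum_bounds (c := 1 / 32) (C := 4) (D := (m + 1 : ℕ))
    (by norm_num) (by norm_num) ?_ ?_
  · filter_upwards [Ioc_mem_nhdsGT (show (0 : ℝ) < 1 / 32 by norm_num)] with r ⟨hr, hr'⟩
    convert rpow_le_coverNum_of_sphere_subset (isBounded_closedBall.subset hG) hsph hr hr'
      using 2
    push_cast
    ring
  · filter_upwards [Ioc_mem_nhdsGT two_pos] with r ⟨hr, hr'⟩
    rw [Real.rpow_natCast]
    convert coverNum_le_of_subset_closedBall hr hr' hG using 3
    norm_num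
end

section
/- Fix δ ∈ (0, 1/200) and let r_1 < r_2 < ⋯ < r_k be points in [1/2, 1] with r_{i+1} − r_i ≥ 100δ for all i. Suppose C_1, …, C_k ⊆ ℝ^2 where C_i is the boundary of an axis-aligned square of side length r_i. If M is a positive integer such that some point of ℝ^2 lies in the closed δ-neighborhoods of the right sides of at least M of the squares C_i, then the Lebesgue measure of the δ-neighborhood of ⋃_i C_i is at least (M/2)·δ. -/
open Set Metric MeasureTheory
open scoped ENNReal

/-!
Every square whose right side passes within `δ` of the common point `p` contributes the
`δ`-neighbourhood of its left side, a rectangle of area at least `δ`, to the `δ`-neighbourhood of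
the union. The right sides all have `x`-coordinate within `δ` of `p.1`, so the left sides sit at
`x`-coordinates shifted by the side lengths, which are `100δ`-separated; hence these rectangles are
pairwise disjoint and their areas add up.
-/

theorem Metric.cthickening_prod {α β : Type*} [PseudoEMetricSpace α] [PseudoEMetricSpace β]
    (δ : ℝ) (s : Set α) (t : Set β) :
    cthickening δ (s ×ˢ t) = cthickening δ s ×ˢ cthickening δ t := by
  ext x
  simp only [mem_cthickening_iff, infEDist_prod, max_le_iff, mem_prod]

theorem MeasureTheory.card_mul_le_measure_biUnion_finset {ι α : Type*} [MeasurableSpace α]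
    {μ : Measure α} {s : Finset ι} {A : ι → Set α} {v : ℝ≥0∞}
    (hd : (s : Set ι).PairwiseDisjoint A) (hm : ∀ i ∈ s, MeasurableSet (A i))
    (hv : ∀ i ∈ s, v ≤ μ (A i)) :
    s.card * v ≤ μ (⋃ i ∈ s, A i) := by
  rw [measure_biUnion_finset hd hm, ← nsmul_eq_mul]
  exact Finset.card_nsmul_le_sum s _ v hv

theorem leftSide_subset_sphere (c : ℝ × ℝ) {s : ℝ} (hs : 0 ≤ s) :
    {c.1 - s} ×ˢ Icc (c.2 - s) (c.2 + s) ⊆ sphere c s := by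
  rintro ⟨x, y⟩ ⟨rfl : x = c.1 - s, hy⟩
  have hy' : |y - c.2| ≤ s := abs_le.2 ⟨by linarith [hy.1], by linarith [hy.2]⟩
  rw [mem_sphere_iff_norm, Prod.norm_def, Prod.fst_sub, Prod.snd_sub, Real.norm_eq_abs,
    Real.norm_eq_abs, sub_sub_cancel_left, abs_neg, abs_of_nonneg hs]
  exact max_eq_left hy'

theorem closedBall_prod_Icc_subset_cthickening_sphere (c : ℝ × ℝ) {s δ : ℝ} (hs : 0 ≤ s)
    (hδ : 0 ≤ δ) :
    closedBall (c.1 - s) δ ×ˢ Icc (c.2 - s) (c.2 + s) ⊆ cthickening δ (sphere c s) :=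
  calc closedBall (c.1 - s) δ ×ˢ Icc (c.2 - s) (c.2 + s)
      ⊆ cthickening δ {c.1 - s} ×ˢ cthickening δ (Icc (c.2 - s) (c.2 + s)) := by
        rw [cthickening_singleton _ hδ]
        exact prod_mono_right (self_subset_cthickening _)
    _ = cthickening δ ({c.1 - s} ×ˢ Icc (c.2 - s) (c.2 + s)) := (cthickening_prod _ _ _).symm
    _ ⊆ cthickening δ (sphere c s) := cthickening_subset_of_subset _ (leftSide_subset_sphere c hs)

theorem dist_fst_le_of_mem_cthickening_singleton_prod {α β : Type*} [PseudoMetricSpace α]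
    [PseudoMetricSpace β] {δ : ℝ} {a : α} {t : Set β} {p : α × β} (hδ : 0 ≤ δ) (hp : p ∈ cthickening δ ({a} ×ˢ t)) :
    dist p.1 a ≤ δ := by
  rw [cthickening_prod, cthickening_singleton _ hδ] at hp
  exact hp.1

theorem le_dist_of_forall_lt_add_le {ι : Type*} [LinearOrder ι] {r : ι → ℝ} {d : ℝ}
    (h : ∀ i j, i < j → r i + d ≤ r j) {i j : ι} (hij : i ≠ j) : d ≤ dist (r i) (r j) := by
  rw [Real.dist_eq]
  rcases hij.lt_or_gt with hlt | hgt
  · linarith [h i j hlt, neg_le_abs (r i - r j)]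
  · linarith [h j i hgt, le_abs_self (r i - r j)]

theorem disjoint_closedBall_of_dist_add_le {x l l' u v δ : ℝ} (hl : dist x (l + u) ≤ δ)
    (hl' : dist x (l' + v) ≤ δ) (huv : 4 * δ < dist u v) :
    Disjoint (closedBall l δ) (closedBall l' δ) := by
  refine closedBall_disjoint_closedBall ?_
  rw [Real.dist_eq] at *
  cases abs_cases (x - (l + u)) <;> cases abs_cases (x - (l' + v)) <;> cases abs_cases (u - v) <;>
    cases abs_cases (l - l') <;> linarith

theorem ofReal_le_volume_closedBall_prod_Icc {x δ a b : ℝ} (hδ : 0 ≤ δ) (hab : 1 / 2 ≤ b - a) :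
    ENNReal.ofReal δ ≤ volume (closedBall x δ ×ˢ Icc a b) := by
  rw [Measure.volume_eq_prod, Measure.prod_prod, Real.volume_closedBall, Real.volume_Icc,
    ← ENNReal.ofReal_mul (by linarith)]
  exact ENNReal.ofReal_le_ofReal (by nlinarith)

theorem squares_thickening_volume_ge_general (δ : ℝ) (hδ : δ ∈ Set.Ioo (0:ℝ) (1/200))
    (k : ℕ) (r : Fin k → ℝ) (c : Fin k → ℝ × ℝ)
    (hr : ∀ i, r i ∈ Set.Icc (1/2 : ℝ) 1)
    (hsep : ∀ i j : Fin k, i < j → r i + 100 * δ ≤ r j)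
    (M : ℕ)
    (hpt : ∃ p : ℝ × ℝ, M ≤ {i : Fin k |
        p ∈ cthickening δ
          ({(c i).1 + r i / 2} ×ˢ Set.Icc ((c i).2 - r i / 2) ((c i).2 + r i / 2))}.ncard) :
    ENNReal.ofReal ((M / 2 : ℝ) * δ) ≤
      volume (cthickening δ (⋃ i, {y : ℝ × ℝ | ‖y - c i‖ = r i / 2})) := by
  classical
  obtain ⟨hδ0, -⟩ := hδ
  obtain ⟨p, hp⟩ := hpt
  set S := {i : Fin k | p ∈ cthickening δ
    ({(c i).1 + r i / 2} ×ˢ Icc ((c i).2 - r i / 2) ((c i).2 + r i / 2))}.toFinset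
  have hM : M ≤ S.card := by rwa [Set.ncard_eq_toFinset_card'] at hp
  set A : Fin k → Set (ℝ × ℝ) := fun i =>
    closedBall ((c i).1 - r i / 2) δ ×ˢ Icc ((c i).2 - r i / 2) ((c i).2 + r i / 2)
  have hright : ∀ i ∈ S, dist p.1 ((c i).1 - r i / 2 + r i) ≤ δ := fun i hi => by
    convert dist_fst_le_of_mem_cthickening_singleton_prod hδ0.le (by simpa [S] using hi) using 2
    ring
  have hdisj : (S : Set (Fin k)).PairwiseDisjoint A := fun i hi j hj hij =>
    (disjoint_closedBall_of_dist_add_le (hright i hi) (hright j hj)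
      (by linarith [le_dist_of_forall_lt_add_le hsep hij])).set_prod_left _ _
  have hsub : ∀ i, A i ⊆ cthickening δ (⋃ i, {y : ℝ × ℝ | ‖y - c i‖ = r i / 2}) := fun i =>
    (closedBall_prod_Icc_subset_cthickening_sphere (c i) (by linarith [(hr i).1]) hδ0.le).trans
      (cthickening_subset_of_subset _ fun y hy => mem_iUnion.2 ⟨i, mem_sphere_iff_norm.1 hy⟩)
  calc ENNReal.ofReal ((M / 2 : ℝ) * δ)
      ≤ M * ENNReal.ofReal δ := by
        rw [← ENNReal.ofReal_natCast, ← ENNReal.ofReal_mul (Nat.cast_nonneg M)]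
        exact ENNReal.ofReal_le_ofReal
          (mul_le_mul_of_nonneg_right (half_le_self (Nat.cast_nonneg M)) hδ0.le)
    _ ≤ S.card * ENNReal.ofReal δ := by gcongr
    _ ≤ volume (⋃ i ∈ S, A i) := card_mul_le_measure_biUnion_finset hdisj
        (fun i _ => measurableSet_closedBall.prod measurableSet_Icc)
        (fun i _ => ofReal_le_volume_closedBall_prod_Icc hδ0.le (by linarith [(hr i).1]))
    _ ≤ _ := measure_mono (iUnion₂_subset fun i _ => hsub i)

/-- If among `100δ`-separated side lengths `r 1 < … < r k` in `[1/2,1]`,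
some point of the plane lies in the closed `δ`-neighbourhoods of the right sides of at
least `M` of the corresponding square boundaries, then the `δ`-neighbourhood of the union
of the square boundaries has area at least `(M/2)·δ`. -/
theorem squares_thickening_volume_ge (δ : ℝ) (hδ : δ ∈ Set.Ioo (0:ℝ) (1/200))
    (k : ℕ) (r : Fin k → ℝ) (c : Fin k → ℝ × ℝ)
    (hr : ∀ i, r i ∈ Set.Icc (1/2 : ℝ) 1)
    (hsep : ∀ i j : Fin k, i < j → r i + 100 * δ ≤ r j)
    (M : ℕ) (hM : 0 < M)
    (hpt : ∃ p : ℝ × ℝ, M ≤ {i : Fin k |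
        p ∈ cthickening δ
          ({(c i).1 + r i / 2} ×ˢ Set.Icc ((c i).2 - r i / 2) ((c i).2 + r i / 2))}.ncard) :
    ENNReal.ofReal ((M / 2 : ℝ) * δ) ≤
      volume (cthickening δ (⋃ i, {y : ℝ × ℝ | ‖y - c i‖ = r i / 2})) :=
  squares_thickening_volume_ge_general δ hδ k r c hr hsep M hpt
end

section
/- For every integer n > 1 there exists a set B ⊆ {0, 1, …, n−1} with |B| ≤ 2(n log n)^{1/2} + 2 such that B + B covers all residues modulo n, i.e., for every m ∈ {0,…,n−1} there exist b_1, b_2 ∈ B with b_1 + b_2 ≡ m (mod n). -/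
/-!
Writing `m < k²` in base `k` as `m = m % k + (m / k) * k` shows that the `k` digits `0, …, k - 1`
together with the `k` multiples `0, k, …, (k - 1) k` form a basis of order two for `[0, k²)`, with
at most `2k` elements. Taking `k = ⌊√(n - 1)⌋ + 1`, so that `n ≤ k²`, gives a basis of `[0, n)` of
size at most `2√(n - 1) + 2`, and `n - 1 ≤ n log n` because `log n ≥ 1 - 1/n`.
-/

open Finset

def digitsAndMultiples (k n : ℕ) : Finset ℕ :=
  (range k ∪ (range k).image (· * k)).filter (· < n)

lemma digitsAndMultiples_subset_range (k n : ℕ) : digitsAndMultiples k n ⊆ range n := by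
  intro a ha
  simpa using (mem_filter.1 ha).2

lemma card_digitsAndMultiples_le (k n : ℕ) : #(digitsAndMultiples k n) ≤ 2 * k :=
  calc #(digitsAndMultiples k n)
      ≤ #(range k ∪ (range k).image (· * k)) := card_filter_le _ _
    _ ≤ #(range k) + #((range k).image (· * k)) := card_union_le _ _
    _ ≤ k + k := by
        gcongr
        · simp
        · exact card_image_le.trans (by simp)
    _ = 2 * k := by ring

lemma exists_add_eq_of_lt {k n m : ℕ} (hn : n ≤ k * k) (hm : m < n) :
    ∃ b₁ ∈ digitsAndMultiples k n, ∃ b₂ ∈ digitsAndMultiples k n, b₁ + b₂ = m := by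
  have hk : 0 < k := Nat.pos_of_ne_zero (by rintro rfl; omega)
  refine ⟨m % k, ?_, m / k * k, ?_, Nat.mod_add_div' m k⟩
  · exact mem_filter.2 ⟨mem_union_left _ (mem_range.2 (Nat.mod_lt m hk)),
      (Nat.mod_le m k).trans_lt hm⟩
  · refine mem_filter.2 ⟨mem_union_right _ (mem_image_of_mem _ ?_),
      (Nat.div_mul_le_self m k).trans_lt hm⟩
    exact mem_range.2 (Nat.div_lt_of_lt_mul (by omega))

lemma natCast_sub_one_le_mul_log (n : ℕ) : ((n - 1 : ℕ) : ℝ) ≤ n * Real.log n := by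
  rcases Nat.eq_zero_or_pos n with rfl | hn
  · simp
  have hn' : (0 : ℝ) < n := by exact_mod_cast hn
  calc ((n - 1 : ℕ) : ℝ) = n * (1 - (n : ℝ)⁻¹) := by
        rw [Nat.cast_sub hn, mul_sub, mul_inv_cancel₀ hn'.ne']
        simp
    _ ≤ n * Real.log n := by gcongr; exact Real.one_sub_inv_le_log_of_pos hn'

theorem nathanson_thin_basis_general (n : ℕ) :
    ∃ B : Finset ℕ, B ⊆ Finset.range n ∧
      (B.card : ℝ) ≤ 2 * Real.sqrt (n * Real.log n) + 2 ∧
      ∀ m < n, ∃ b₁ ∈ B, ∃ b₂ ∈ B, (b₁ + b₂) % n = m := by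
  set s := Nat.sqrt (n - 1)
  have hsq : n ≤ (s + 1) * (s + 1) := by
    have := Nat.sqrt_lt'.1 (Nat.lt_add_one s)
    rw [sq] at this
    omega
  refine ⟨digitsAndMultiples (s + 1) n, digitsAndMultiples_subset_range _ _, ?_, ?_⟩
  · have hs : (s : ℝ) ≤ Real.sqrt (n * Real.log n) :=
      Real.nat_sqrt_le_real_sqrt.trans (Real.sqrt_le_sqrt (natCast_sub_one_le_mul_log n))
    have hcard : (#(digitsAndMultiples (s + 1) n) : ℝ) ≤ 2 * (s + 1) := by
      exact_mod_cast card_digitsAndMultiples_le (s + 1) n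
    linarith
  · intro m hm
    obtain ⟨b₁, hb₁, b₂, hb₂, hsum⟩ := exists_add_eq_of_lt hsq hm
    exact ⟨b₁, hb₁, b₂, hb₂, by rw [hsum, Nat.mod_eq_of_lt hm]⟩

/-- Nathanson. For every `n > 1` there is a set `B ⊆ {0,…,n-1}` with
`|B| ≤ 2√(n log n) + 2` such that `B + B` covers all residues mod `n`. -/
theorem nathanson_thin_basis (n : ℕ) (hn : 1 < n) :
    ∃ B : Finset ℕ, B ⊆ Finset.range n ∧
      (B.card : ℝ) ≤ 2 * Real.sqrt (n * Real.log n) + 2 ∧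
      ∀ m < n, ∃ b₁ ∈ B, ∃ b₂ ∈ B, (b₁ + b₂) % n = m :=
  nathanson_thin_basis_general n
end

section
/- For every σ > 0 there exists a compact set F ⊆ [0,1] with Assouad dimension at most 1/2 + σ such that the difference set {|x − y| : x, y ∈ F} contains [0,1]. -/
open Set Metric MeasureTheory Filter Topology
open scoped ENNReal

/-!
In base `b = m²` take the digit set `D = {r} ∪ {q m + (m - 1)}` (`q, r < m`), of size at most
`2m`. Every base-`b` digit is a difference of two digits of `D`, so subtracting expansions
digitwise shows that the difference set of the Cantor set `F` with digits `D` contains `[0, 1]`.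
A ball of radius `R ≤ b⁻ᵏ` meets at most four level-`k` cylinders of `F`, and each of them is
covered by `|D| ^ j` cylinders of level `k + j`; hence
`assouadDim F ≤ log |D| / log b ≤ 1/2 + log 2 / (2 log m)`.
-/

open Real
open scoped Pointwise

variable {b : ℕ}

theorem ofDigits_sub_ofDigits_of_add {x y z : ℕ → Fin b} (h : ∀ i, (x i : ℕ) = y i + z i) :
    ofDigits x - ofDigits y = ofDigits z := by
  rw [ofDigits, ofDigits, ← summable_ofDigitsTerm.tsum_sub summable_ofDigitsTerm, ofDigits]
  congr 1 with i
  simp only [ofDigitsTerm, h]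
  push_cast
  ring

theorem ofDigits_sub_sum_ofDigitsTerm_mem_Icc (c : ℕ → Fin b) (n : ℕ) :
    ofDigits c - ∑ i ∈ Finset.range n, ofDigitsTerm c i ∈ Icc 0 ((b : ℝ) ^ n)⁻¹ := by
  rw [ofDigits_eq_sum_add_ofDigits c n, add_sub_cancel_left]
  exact ⟨by positivity [ofDigits_nonneg (fun i ↦ c (i + n))],
    mul_le_of_le_one_right (by positivity) (ofDigits_le_one _)⟩

theorem sum_range_add_ofDigitsTerm (c : ℕ → Fin b) (k j : ℕ) :
    ∑ i ∈ Finset.range (k + j), ofDigitsTerm c i = ∑ i ∈ Finset.range k, ofDigitsTerm c i +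
      ((b : ℝ) ^ k)⁻¹ * ∑ i ∈ Finset.range j, ofDigitsTerm (fun i ↦ c (k + i)) i := by
  rw [Finset.sum_range_add, Finset.mul_sum]
  congr 1
  refine Finset.sum_congr rfl fun i _ ↦ ?_
  simp only [ofDigitsTerm, add_assoc, pow_add, mul_inv]
  ring

theorem exists_int_pow_mul_sum_ofDigitsTerm (c : ℕ → Fin b) (n : ℕ) :
    ∃ N : ℤ, (b : ℝ) ^ n * ∑ i ∈ Finset.range n, ofDigitsTerm c i = N := by
  have hb : (b : ℝ) ≠ 0 := by exact_mod_cast (Fin.pos (c 0)).ne'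
  induction n with
  | zero => exact ⟨0, by simp⟩
  | succ n ih =>
    obtain ⟨N, hN⟩ := ih
    refine ⟨b * N + c n, ?_⟩
    rw [Finset.sum_range_succ, ofDigitsTerm, mul_add, pow_succ, mul_right_comm, hN]
    push_cast
    field_simp

theorem exists_pow_inv_le_and_le_pow_inv {β : ℝ} (hβ : 1 < β) {r R : ℝ} (hr : 0 < r)
    (hrR : r < R) (hR : R ≤ 1) :
    ∃ k j : ℕ, R ≤ (β ^ k)⁻¹ ∧ (β ^ (k + j))⁻¹ ≤ r ∧ β ^ j ≤ β ^ 2 * (R / r) := by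
  have hR₀ : 0 < R := hr.trans hrR
  have hlogR : 0 ≤ logb β R⁻¹ := logb_nonneg hβ (one_le_inv₀ hR₀ |>.2 hR)
  have hlogRr : logb β R⁻¹ < logb β r⁻¹ := logb_lt_logb hβ (inv_pos.2 hR₀) (inv_strictAnti₀ hr hrR)
  set k := ⌊logb β R⁻¹⌋₊
  set l := ⌈logb β r⁻¹⌉₊
  have hk : (k : ℝ) ≤ logb β R⁻¹ := Nat.floor_le hlogR
  have hl : logb β r⁻¹ ≤ l := Nat.le_ceil _
  have hkl : k ≤ l := by exact_mod_cast hk.trans (hlogRr.le.trans hl)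
  refine ⟨k, l - k, ?_, ?_, ?_⟩
  · rw [le_inv_comm₀ hR₀ (by positivity), ← rpow_natCast]
    exact (le_logb_iff_rpow_le hβ (inv_pos.2 hR₀)).1 hk
  · rw [Nat.add_sub_cancel' hkl, inv_le_comm₀ (by positivity) hr, ← rpow_natCast]
    exact (logb_le_iff_le_rpow hβ (inv_pos.2 hr)).1 hl
  · have hj : ((l - k : ℕ) : ℝ) ≤ logb β (R / r) + 2 := by
      have hdiv : logb β (R / r) = logb β r⁻¹ - logb β R⁻¹ := by
        rw [logb_div hR₀.ne' hr.ne', logb_inv, logb_inv, neg_sub_neg]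
      rw [Nat.cast_sub hkl, hdiv]
      linarith [Nat.lt_floor_add_one (logb β R⁻¹), Nat.ceil_lt_add_one (hlogR.trans hlogRr.le)]
    calc β ^ (l - k) = β ^ ((l - k : ℕ) : ℝ) := (rpow_natCast _ _).symm
      _ ≤ β ^ (logb β (R / r) + 2) := rpow_le_rpow_of_exponent_le hβ.le hj
      _ = β ^ 2 * (R / r) := by
        rw [rpow_add (by positivity), rpow_logb (by positivity) hβ.ne' (by positivity),
          rpow_two, mul_comm]

theorem natCast_le_rpow_logb {β : ℝ} (hβ : 0 < β) (hβ₁ : β ≠ 1) (n : ℕ) :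
    (n : ℝ) ≤ β ^ logb β n := by
  rcases n.eq_zero_or_pos with rfl | hn
  · simp
  · rw [rpow_logb hβ hβ₁ (by exact_mod_cast hn)]

theorem coverNum_le_card_s11 {X : Type*} [PseudoMetricSpace X] {F : Set X} {r : ℝ} {t : Finset X}
    (h : F ⊆ ⋃ p ∈ t, closedBall p r) : coverNum F r ≤ t.card :=
  Nat.sInf_le ⟨t, rfl, h⟩

theorem assouadDim_le_of_exists_finset_cover {X : Type*} [PseudoMetricSpace X] {F : Set X}
    {s C : ℝ} (hs : 0 ≤ s) (hC : 0 < C)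
    (h : ∀ x ∈ F, ∀ R r : ℝ, 0 < r → r < R → ∃ t : Finset X, (t.card : ℝ) ≤ C * (R / r) ^ s ∧
      F ∩ closedBall x R ⊆ ⋃ p ∈ t, closedBall p r) :
    assouadDim F ≤ s :=
  csInf_le ⟨0, fun _ h ↦ h.1⟩ ⟨hs, C, hC, fun x hx R _ r hr hrR ↦ by
    obtain ⟨t, ht, hcover⟩ := h x hx R r hr hrR
    exact (Nat.cast_le.2 (coverNum_le_card_s11 hcover)).trans ht⟩

def digitCantor (D : Finset (Fin b)) : Set ℝ :=
  ofDigits '' Set.univ.pi fun _ ↦ (D : Set (Fin b))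

theorem isCompact_digitCantor (D : Finset (Fin b)) : IsCompact (digitCantor D) :=
  (isCompact_univ_pi fun _ ↦ D.finite_toSet.isCompact).image continuous_ofDigits

theorem digitCantor_subset_Icc (D : Finset (Fin b)) : digitCantor D ⊆ Icc 0 1 := by
  rintro _ ⟨c, -, rfl⟩
  exact ⟨ofDigits_nonneg c, ofDigits_le_one c⟩

theorem Icc_subset_digitCantor_sub (hb : 1 < b) {D : Finset (Fin b)}
    (hD : ∀ t : Fin b, ∃ x ∈ D, ∃ y ∈ D, (x : ℕ) = y + t) :
    Icc 0 1 ⊆ digitCantor D - digitCantor D := by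
  intro d hd
  obtain ⟨e, -, rfl⟩ := ofDigits_SurjOn hb hd
  choose x hx y hy hxy using fun i ↦ hD (e i)
  exact ⟨ofDigits x, ⟨x, Set.mem_univ_pi.2 hx, rfl⟩, ofDigits y, ⟨y, Set.mem_univ_pi.2 hy, rfl⟩,
    ofDigits_sub_ofDigits_of_add hxy⟩

theorem pow_mul_sum_ofDigitsTerm_mem_Icc (c : ℕ → Fin b) {x R : ℝ} {k : ℕ}
    (hR : R ≤ ((b : ℝ) ^ k)⁻¹) (hc : ofDigits c ∈ closedBall x R) :
    (b : ℝ) ^ k * ∑ i ∈ Finset.range k, ofDigitsTerm c i ∈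
      Icc ((b : ℝ) ^ k * (x - R) - 1) ((b : ℝ) ^ k * (x - R) + 2) := by
  have hbk : 0 < (b : ℝ) ^ k := pow_pos (Nat.cast_pos.2 (Fin.pos (c 0))) k
  have hk := ofDigits_sub_sum_ofDigitsTerm_mem_Icc c k
  have hk₀ := mul_nonneg hbk.le hk.1
  have hk₁ := (mul_le_mul_of_nonneg_left hk.2 hbk.le).trans_eq (mul_inv_cancel₀ hbk.ne')
  have hRk := (mul_le_mul_of_nonneg_left hR hbk.le).trans_eq (mul_inv_cancel₀ hbk.ne')
  rw [mem_closedBall, Real.dist_eq, abs_le] at hc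
  have := mul_le_mul_of_nonneg_left hc.1 hbk.le
  have := mul_le_mul_of_nonneg_left hc.2 hbk.le
  constructor <;> linarith

theorem exists_finset_cover_digitCantor_inter_closedBall (D : Finset (Fin b)) (x : ℝ) {R r : ℝ}
    (k j : ℕ) (hR : R ≤ ((b : ℝ) ^ k)⁻¹) (hr : ((b : ℝ) ^ (k + j))⁻¹ ≤ r) :
    ∃ t : Finset ℝ, t.card ≤ 4 * D.card ^ j ∧
      digitCantor D ∩ closedBall x R ⊆ ⋃ p ∈ t, closedBall p r := by
  classical
  set α : ℝ := (b : ℝ) ^ k * (x - R) - 1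
  set tails : Finset ℝ := (Fintype.piFinset fun _ : Fin j ↦ D).image
    fun w ↦ ∑ i : Fin j, (w i : ℝ) * ((b : ℝ) ^ ((i : ℕ) + 1))⁻¹
  -- the centres are the level-`(k + j)` prefixes `b⁻ᵏ (N + tail)`: here `N`, which is `bᵏ` times
  -- the level-`k` prefix, takes at most four integer values, and `tail` comes from the next `j`
  -- digits
  refine ⟨(Finset.Icc ⌈α⌉ (⌈α⌉ + 3) ×ˢ tails).image fun p ↦ ((b : ℝ) ^ k)⁻¹ * (p.1 + p.2),
    ?_, ?_⟩
  · calc _ ≤ (Finset.Icc ⌈α⌉ (⌈α⌉ + 3) ×ˢ tails).card := Finset.card_image_le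
      _ = 4 * tails.card := by rw [Finset.card_product, Int.card_Icc]; congr; omega
      _ ≤ 4 * D.card ^ j := by
        gcongr
        exact Finset.card_image_le.trans (by simp [Fintype.card_piFinset])
  rintro _ ⟨⟨c, hc, rfl⟩, hy⟩
  obtain ⟨N, hN⟩ := exists_int_pow_mul_sum_ofDigitsTerm c k
  have hbk : 0 < (b : ℝ) ^ k := pow_pos (Nat.cast_pos.2 (Fin.pos (c 0))) k
  have hNα : ⌈α⌉ ≤ N ∧ N ≤ ⌈α⌉ + 3 := by
    have hN' := hN ▸ pow_mul_sum_ofDigitsTerm_mem_Icc c hR hy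
    refine ⟨Int.ceil_le.2 hN'.1, ?_⟩
    have : (N : ℝ) ≤ ⌈α⌉ + 3 := by linarith [hN'.2, Int.le_ceil α]
    exact_mod_cast this
  set tail : ℝ := ∑ i : Fin j, (c (k + i) : ℝ) * ((b : ℝ) ^ ((i : ℕ) + 1))⁻¹
  have htail : tail ∈ tails := Finset.mem_image_of_mem _ <|
    Fintype.mem_piFinset.2 fun i ↦ Set.mem_univ_pi.1 hc (k + i)
  have hcenter : ((b : ℝ) ^ k)⁻¹ * (N + tail) = ∑ i ∈ Finset.range (k + j), ofDigitsTerm c i := by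
    rw [sum_range_add_ofDigitsTerm, Finset.sum_range (n := j), ← hN, mul_add,
      inv_mul_cancel_left₀ hbk.ne']
    rfl
  refine Set.mem_iUnion₂.2 ⟨_, Finset.mem_image_of_mem _
    ((Finset.mem_product (p := (N, tail))).2 ⟨Finset.mem_Icc.2 hNα, htail⟩), ?_⟩
  have hkj := ofDigits_sub_sum_ofDigitsTerm_mem_Icc c (k + j)
  rw [mem_closedBall, Real.dist_eq, hcenter, abs_of_nonneg hkj.1]
  exact hkj.2.trans hr

theorem exists_finset_cover_digitCantor_inter_closedBall_of_le_one (hb : 1 < b)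
    (D : Finset (Fin b)) (x : ℝ) {r R : ℝ} (hr : 0 < r) (hrR : r < R) (hR : R ≤ 1) :
    ∃ t : Finset ℝ, (t.card : ℝ) ≤ 4 * ((b : ℝ) ^ 2 * (R / r)) ^ logb b D.card ∧
      digitCantor D ∩ closedBall x R ⊆ ⋃ p ∈ t, closedBall p r := by
  have hb' : (1 : ℝ) < b := by exact_mod_cast hb
  obtain ⟨k, j, hRk, hrkj, hj⟩ := exists_pow_inv_le_and_le_pow_inv hb' hr hrR hR
  obtain ⟨t, ht, hcover⟩ := exists_finset_cover_digitCantor_inter_closedBall D x k j hRk hrkj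
  refine ⟨t, ?_, hcover⟩
  have hs : 0 ≤ logb b D.card := div_nonneg (log_natCast_nonneg _) (log_nonneg hb'.le)
  calc (t.card : ℝ) ≤ 4 * (D.card : ℝ) ^ j := by exact_mod_cast ht
    _ ≤ 4 * ((b : ℝ) ^ logb b D.card) ^ j := by
      gcongr
      exact natCast_le_rpow_logb (by positivity) hb'.ne' _
    _ = 4 * ((b : ℝ) ^ j) ^ logb b D.card := by
      rw [← rpow_natCast, ← rpow_natCast, ← rpow_mul (by positivity),
        ← rpow_mul (by positivity), mul_comm (j : ℝ)]
    _ ≤ 4 * ((b : ℝ) ^ 2 * (R / r)) ^ logb b D.card := by gcongr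

theorem assouadDim_digitCantor_le (hb : 1 < b) (D : Finset (Fin b)) :
    assouadDim (digitCantor D) ≤ logb b D.card := by
  have hb' : (1 : ℝ) < b := by exact_mod_cast hb
  have hs : 0 ≤ logb b D.card := div_nonneg (log_natCast_nonneg _) (log_nonneg hb'.le)
  refine assouadDim_le_of_exists_finset_cover hs (C := 4 * ((b : ℝ) ^ 2) ^ logb b D.card)
    (by positivity) fun x hx R r hr hrR ↦ ?_
  have hF := digitCantor_subset_Icc D
  rcases lt_or_ge r 1 with hr₁ | hr₁
  · -- as `F ⊆ [0, 1]`, the ball of radius `R` meets `F` in the same set as that of radius `min R 1`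
    obtain ⟨t, ht, hcover⟩ := exists_finset_cover_digitCantor_inter_closedBall_of_le_one hb D x hr
      (lt_min hrR hr₁) (min_le_right R 1)
    refine ⟨t, ht.trans ?_, fun y hy ↦ hcover ⟨hy.1, mem_closedBall.2 (le_min hy.2 ?_)⟩⟩
    · have hmin : 0 ≤ min R 1 / r := div_nonneg (le_min (hr.trans hrR).le zero_le_one) hr.le
      rw [mul_rpow (by positivity) hmin, ← mul_assoc]
      gcongr
      exact min_le_left R 1
    · exact Real.dist_le_of_mem_Icc_01 (hF hy.1) (hF hx)
  · refine ⟨{x}, ?_, fun y hy ↦ ?_⟩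
    · rw [Finset.card_singleton, Nat.cast_one, mul_assoc]
      have := one_le_rpow (one_le_pow₀ hb'.le (n := 2)) hs
      have := one_le_rpow ((one_le_div hr).2 hrR.le) hs
      nlinarith
    · rw [Finset.set_biUnion_singleton]
      exact (Real.dist_le_of_mem_Icc_01 (hF hy.1) (hF hx)).trans hr₁

/-- The base-`m²` digits `r` and `q m + (m - 1)` for `q, r < m`, written as pairs `(q, r)` of
base-`m` digits. -/
def sqrtDigits (m : ℕ) [NeZero m] : Finset (Fin (m * m)) :=
  (Finset.univ.image fun r : Fin m ↦ finProdFinEquiv (0, r)) ∪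
    Finset.univ.image fun q : Fin m ↦ finProdFinEquiv (q, Fin.rev 0)

theorem card_sqrtDigits_le (m : ℕ) [NeZero m] : (sqrtDigits m).card ≤ 2 * m :=
  calc _ ≤ m + m := (Finset.card_union_le _ _).trans <|
        add_le_add (Finset.card_image_le.trans (by simp)) (Finset.card_image_le.trans (by simp))
    _ = 2 * m := (two_mul m).symm

theorem exists_sqrtDigits_eq_add (m : ℕ) [NeZero m] (t : Fin (m * m)) :
    ∃ x ∈ sqrtDigits m, ∃ y ∈ sqrtDigits m, (x : ℕ) = y + t := by
  -- `(q, r)` is the difference of the digits `(q, m - 1)` and `(0, m - 1 - r)`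
  obtain ⟨⟨q, r⟩, rfl⟩ := finProdFinEquiv.surjective t
  refine ⟨finProdFinEquiv (q, Fin.rev 0), Finset.mem_union_right _ (Finset.mem_image_of_mem _
    (Finset.mem_univ q)), finProdFinEquiv (0, Fin.rev r), Finset.mem_union_left _
    (Finset.mem_image_of_mem _ (Finset.mem_univ _)), ?_⟩
  simp only [finProdFinEquiv_apply_val, Fin.val_rev, Fin.val_zero]
  omega

theorem logb_card_sqrtDigits_le {m : ℕ} [NeZero m] (hm : 1 < m) :
    logb (m * m : ℕ) (sqrtDigits m).card ≤ 1 / 2 + log 2 / (2 * log m) := by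
  have hlogm : 0 < log m := log_pos (by exact_mod_cast hm)
  have hcard : log (sqrtDigits m).card ≤ log 2 + log m := by
    rw [← log_mul two_ne_zero (by positivity)]
    exact log_le_log (Nat.cast_pos.2 (Finset.card_pos.2 ⟨_, Finset.mem_union_left _
      (Finset.mem_image_of_mem _ (Finset.mem_univ 0))⟩)) (by exact_mod_cast card_sqrtDigits_le m)
  rw [logb, Nat.cast_mul, log_mul (by positivity) (by positivity), div_le_iff₀ (by positivity)]
  field_simp
  linarith

/-- For every `σ > 0` there is a compact `F ⊆ [0,1]` of Assouad dimension
at most `1/2 + σ` whose difference set contains `[0,1]`. -/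
theorem exists_compact_assouad_half_diff_set (σ : ℝ) (hσ : 0 < σ) :
    ∃ F : Set ℝ, IsCompact F ∧ F ⊆ Set.Icc (0:ℝ) 1 ∧ assouadDim F ≤ 1/2 + σ ∧
      ∀ d ∈ Set.Icc (0:ℝ) 1, ∃ x ∈ F, ∃ y ∈ F, |x - y| = d := by
  obtain ⟨m, hm⟩ := exists_nat_gt (exp (log 2 / (2 * σ)))
  have hm₁ : 1 < m := by exact_mod_cast (one_lt_exp_iff.2 (by positivity)).trans hm
  have : NeZero m := ⟨by positivity⟩
  have hb : 1 < m * m := Nat.one_lt_mul_iff.2 ⟨by positivity, by positivity, .inl hm₁⟩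
  refine ⟨digitCantor (sqrtDigits m), isCompact_digitCantor _, digitCantor_subset_Icc _, ?_,
    fun d hd ↦ ?_⟩
  · have hlog : log 2 / (2 * log m) < σ := by
      have := (lt_log_iff_exp_lt (by positivity)).2 hm
      have hlogm : 0 < log m := log_pos (by exact_mod_cast hm₁)
      rw [div_lt_iff₀ (by positivity)] at this ⊢
      linarith
    calc assouadDim _ ≤ logb (m * m : ℕ) (sqrtDigits m).card := assouadDim_digitCantor_le hb _
      _ ≤ 1 / 2 + log 2 / (2 * log m) := logb_card_sqrtDigits_le hm₁
      _ ≤ 1 / 2 + σ := by linarith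
  · obtain ⟨x, hx, y, hy, rfl⟩ := Icc_subset_digitCantor_sub hb (exists_sqrtDigits_eq_add m) hd
    exact ⟨x, hx, y, hy, abs_of_nonneg hd.1⟩
end

section
/- Let f : (0,1) → [0,1]^2 be Borel measurable, and for r ∈ (0,1) define G_r = ⋃_{t ∈ (0,1)} {y ∈ ℝ^2 : ‖y − f(t)‖_∞ = rt/2}. Then for Lebesgue-almost every r ∈ (0,1), the Hausdorff dimension of G_r is 2. -/
/-!
Sort the parameters `t ∈ (1/2, 1)` by the horizontal strip of height `r/4` containing `(f t).2`:
some strip `I` receives a set `T` of positive measure. For `t ∈ T` the right side of the square of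
`t` lies on the line `x = g_r t := (f t).1 + r t / 2` and, being of half-length `r t / 2 > r / 4`,
crosses the whole strip, so `G_r ⊇ g_r(T) × I`. Since `g_r t - g_r t'` is affine in `r` with slope
`(t - t') / 2`, averaging over `r` shows that for a.e. `r` the push-forward of Lebesgue measure on
`T` under `g_r` has finite `s`-energy for every `s < 1` (a Marstrand-type projection estimate).
Frostman's lemma turns finite energy into a measure with `ν (B(x, ρ)) ≲ ρ ^ s`, and the mass
distribution principle applied to its product with Lebesgue measure on `I` gives
`dimH G_r ≥ 1 + s`.
-/

open Set MeasureTheory ENNReal Metric Filter Topology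

theorem ENNReal.rpow_neg_le_rpow_neg {x y : ℝ≥0∞} {s : ℝ} (hs : 0 ≤ s) (hxy : x ≤ y) :
    y ^ (-s) ≤ x ^ (-s) := by
  rw [ENNReal.rpow_neg, ENNReal.rpow_neg]
  exact ENNReal.inv_le_inv.2 (ENNReal.rpow_le_rpow hxy hs)

theorem setLIntegral_Ioc_enorm_rpow_neg {s L : ℝ} (hs : s < 1) (hL : 0 ≤ L) :
    ∫⁻ u in Ioc 0 L, ‖u‖ₑ ^ (-s) = ENNReal.ofReal (L ^ (1 - s) / (1 - s)) := by
  have hint : IntegrableOn (fun u : ℝ ↦ u ^ (-s)) (Ioc 0 L) := by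
    rw [← intervalIntegrable_iff_integrableOn_Ioc_of_le hL]
    exact intervalIntegral.intervalIntegrable_rpow' (by linarith)
  calc ∫⁻ u in Ioc 0 L, ‖u‖ₑ ^ (-s)
      = ∫⁻ u in Ioc 0 L, ENNReal.ofReal (u ^ (-s)) := by
        refine setLIntegral_congr_fun measurableSet_Ioc fun u hu ↦ ?_
        rw [Real.enorm_of_nonneg hu.1.le, ← ENNReal.ofReal_rpow_of_pos hu.1]
    _ = ENNReal.ofReal (L ^ (1 - s) / (1 - s)) := by
        rw [← ofReal_integral_eq_lintegral_ofReal hint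
          (ae_restrict_of_forall_mem measurableSet_Ioc fun u hu ↦ Real.rpow_nonneg hu.1.le _),
          ← intervalIntegral.integral_of_le hL, integral_rpow (Or.inl (by linarith)),
          Real.zero_rpow (by linarith), neg_add_eq_sub, sub_zero]

theorem setLIntegral_Icc_enorm_rpow_neg {s L : ℝ} (hs : s < 1) (hL : 0 ≤ L) :
    ∫⁻ u in Icc (-L) L, ‖u‖ₑ ^ (-s) = 2 * ENNReal.ofReal (L ^ (1 - s) / (1 - s)) := by
  have hneg : ∫⁻ u in Icc (-L) 0, ‖u‖ₑ ^ (-s) = ∫⁻ u in Ioc 0 L, ‖u‖ₑ ^ (-s) := by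
    rw [← (Measure.measurePreserving_neg volume).setLIntegral_comp_preimage measurableSet_Icc
      (by fun_prop), setLIntegral_congr Ioc_ae_eq_Icc]
    simp [neg_Icc]
  rw [← Icc_union_Ioc_eq_Icc (by linarith) hL, lintegral_union measurableSet_Ioc
    (Iic_disjoint_Ioc le_rfl |>.mono_left Icc_subset_Iic_self), hneg,
    setLIntegral_Ioc_enorm_rpow_neg hs hL, two_mul]

theorem setLIntegral_enorm_rpow_neg_le {s : ℝ} (hs0 : 0 ≤ s) (hs1 : s < 1) (A : Set ℝ) :
    ∫⁻ u in A, ‖u‖ₑ ^ (-s) ≤ ENNReal.ofReal (3 / (1 - s)) * volume A ^ (1 - s) := by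
  rcases eq_or_ne (volume A) 0 with hA0 | hA0
  · simp [Measure.restrict_eq_zero.2 hA0]
  rcases eq_or_ne (volume A) ⊤ with hA | hA
  · rw [hA, ENNReal.top_rpow_of_pos (by linarith), ENNReal.mul_top]
    · exact le_top
    · rw [ne_eq, ENNReal.ofReal_eq_zero, not_le]; exact div_pos three_pos (by linarith)
  set L := (volume A).toReal
  have hAL : volume A = ENNReal.ofReal L := (ENNReal.ofReal_toReal hA).symm
  have hL : 0 < L := ENNReal.toReal_pos hA0 hA
  -- off `[-L, L]` the kernel is at most `L ^ (-s)`, and `A` has measure `L`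
  have hfar : ∫⁻ u in A \ Icc (-L) L, ‖u‖ₑ ^ (-s) ≤ ENNReal.ofReal (L ^ (1 - s)) := by
    calc ∫⁻ u in A \ Icc (-L) L, ‖u‖ₑ ^ (-s)
        ≤ ∫⁻ _ in A \ Icc (-L) L, ENNReal.ofReal L ^ (-s) := by
          refine setLIntegral_mono_ae aemeasurable_const (.of_forall fun u hu ↦ ?_)
          refine ENNReal.rpow_neg_le_rpow_neg hs0 ?_
          rw [Real.enorm_eq_ofReal_abs]
          exact ENNReal.ofReal_le_ofReal (le_abs'.2 (by grind))
      _ ≤ ENNReal.ofReal L ^ (-s) * ENNReal.ofReal L := by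
          rw [setLIntegral_const, ← hAL]; gcongr; exact sdiff_subset
      _ = ENNReal.ofReal (L ^ (1 - s)) := by
          rw [ENNReal.ofReal_rpow_of_pos hL, ← ENNReal.ofReal_mul (by positivity),
            ← Real.rpow_add_one hL.ne', neg_add_eq_sub]
  calc ∫⁻ u in A, ‖u‖ₑ ^ (-s)
      ≤ (∫⁻ u in Icc (-L) L, ‖u‖ₑ ^ (-s)) + ∫⁻ u in A \ Icc (-L) L, ‖u‖ₑ ^ (-s) :=
        (lintegral_mono_set (by simp)).trans (lintegral_union_le _ _ _)
    _ ≤ 2 * ENNReal.ofReal (L ^ (1 - s) / (1 - s)) + ENNReal.ofReal (L ^ (1 - s)) := by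
        rw [setLIntegral_Icc_enorm_rpow_neg hs1 hL.le]; gcongr
    _ ≤ ENNReal.ofReal (3 / (1 - s)) * volume A ^ (1 - s) := by
        have hLs : 0 ≤ L ^ (1 - s) := Real.rpow_nonneg hL.le _
        rw [hAL, ENNReal.ofReal_rpow_of_nonneg hL.le (by linarith), ← ENNReal.ofReal_ofNat 2,
          ← ENNReal.ofReal_mul zero_le_two, ← ENNReal.ofReal_add (by positivity) hLs,
          ← ENNReal.ofReal_mul (by positivity)]
        refine ENNReal.ofReal_le_ofReal ?_
        have : L ^ (1 - s) ≤ L ^ (1 - s) / (1 - s) := le_div_self hLs (by linarith) (by linarith)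
        rw [show 3 / (1 - s) * L ^ (1 - s) = 2 * (L ^ (1 - s) / (1 - s)) + L ^ (1 - s) / (1 - s)
          by ring]
        linarith

theorem setLIntegral_enorm_add_rpow_neg_le {s : ℝ} (hs0 : 0 ≤ s) (hs1 : s < 1) (e : ℝ)
    (A : Set ℝ) :
    ∫⁻ r in A, ‖e + r‖ₑ ^ (-s) ≤ ENNReal.ofReal (3 / (1 - s)) * volume A ^ (1 - s) := by
  rw [(measurePreserving_add_left volume e).setLIntegral_comp_emb
    (measurableEmbedding_addLeft e) (fun u ↦ ‖u‖ₑ ^ (-s)) A]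
  convert setLIntegral_enorm_rpow_neg_le hs0 hs1 _ using 3
  rw [image_add_left, measure_preimage_add]

theorem setLIntegral_enorm_add_mul_rpow_neg_le {s : ℝ} (hs0 : 0 < s) (hs1 : s < 1) (c d : ℝ)
    (A : Set ℝ) :
    ∫⁻ r in A, ‖c + r * d‖ₑ ^ (-s) ≤
      ENNReal.ofReal (3 / (1 - s)) * volume A ^ (1 - s) * ‖d‖ₑ ^ (-s) := by
  rcases eq_or_ne d 0 with rfl | hd
  · rcases eq_or_ne (volume A) 0 with hA | hA
    · simp [Measure.restrict_eq_zero.2 hA]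
    rw [enorm_zero, ENNReal.zero_rpow_of_neg (by linarith), ENNReal.mul_top]
    · exact le_top
    refine mul_ne_zero ?_ (ENNReal.rpow_pos_of_nonneg (pos_iff_ne_zero.2 hA) (by linarith)).ne'
    rw [ne_eq, ENNReal.ofReal_eq_zero, not_le]; exact div_pos three_pos (by linarith)
  have hsplit : ∀ r, ‖c + r * d‖ₑ ^ (-s) = ‖d‖ₑ ^ (-s) * ‖c / d + r‖ₑ ^ (-s) := fun r ↦ by
    rw [← ENNReal.mul_rpow_of_ne_top enorm_ne_top enorm_ne_top, ← enorm_mul]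
    congr 2
    field_simp
  simp_rw [hsplit]
  rw [lintegral_const_mul' _ _ (ENNReal.rpow_ne_top_of_ne_zero (by simpa) enorm_ne_top), mul_comm]
  gcongr
  exact setLIntegral_enorm_add_rpow_neg_le hs0.le hs1 _ _

section RieszEnergy

variable {X : Type*} [PseudoEMetricSpace X] [MeasurableSpace X]

noncomputable def rieszEnergy (s : ℝ) (μ : Measure X) : ℝ≥0∞ :=
  ∫⁻ x, ∫⁻ y, edist x y ^ (-s) ∂μ ∂μ

theorem rieszEnergy_mono {s : ℝ} {μ ν : Measure X} (h : μ ≤ ν) :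
    rieszEnergy s μ ≤ rieszEnergy s ν :=
  lintegral_mono' h fun _ ↦ lintegral_mono' h le_rfl

theorem restrict_closedEBall_le_of_forall_mem {s : ℝ} (hs : 0 ≤ s) {μ : Measure X} {E : Set X}
    (hE : MeasurableSet E) {C : ℝ≥0∞} (h : ∀ x ∈ E, ∀ ρ, μ (closedEBall x ρ) ≤ C * ρ ^ s)
    (z : X) (ρ : ℝ≥0∞) : μ.restrict E (closedEBall z ρ) ≤ C * 2 ^ s * ρ ^ s := by
  rw [Measure.restrict_apply' hE]
  rcases (closedEBall z ρ ∩ E).eq_empty_or_nonempty with h' | ⟨x, hxz, hx⟩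
  · rw [h', measure_empty]; exact zero_le
  calc μ (closedEBall z ρ ∩ E) ≤ μ (closedEBall x (2 * ρ)) := by
        refine measure_mono fun y hy ↦ mem_closedEBall.2 ?_
        calc edist y x ≤ edist y z + edist x z := edist_triangle_right _ _ _
          _ ≤ 2 * ρ := by rw [two_mul]; exact add_le_add hy.1 hxz
    _ ≤ C * (2 * ρ) ^ s := h x hx _
    _ = C * 2 ^ s * ρ ^ s := by rw [ENNReal.mul_rpow_of_nonneg _ _ hs, mul_assoc]

variable [OpensMeasurableSpace X]

theorem measure_closedEBall_le_of_lintegral_le {s : ℝ} (hs : 0 ≤ s) {μ : Measure X} {x : X}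
    {M : ℝ≥0∞} (hM0 : M ≠ 0) (hM : M ≠ ⊤) (hx : ∫⁻ y, edist x y ^ (-s) ∂μ ≤ M) (ρ : ℝ≥0∞) :
    μ (closedEBall x ρ) ≤ M * ρ ^ s := by
  have hmarkov : μ (closedEBall x ρ) * ρ ^ (-s) ≤ M :=
    calc μ (closedEBall x ρ) * ρ ^ (-s)
        ≤ ρ ^ (-s) * μ {y | ρ ^ (-s) ≤ edist x y ^ (-s)} := by
          rw [mul_comm]
          gcongr
          exact fun y hy ↦ ENNReal.rpow_neg_le_rpow_neg hs (mem_closedEBall'.1 hy)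
      _ ≤ M := (mul_meas_ge_le_lintegral₀ (by fun_prop) _).trans hx
  rwa [← ENNReal.le_div_iff_mul_le (.inr hM0) (.inr hM), div_eq_mul_inv, ← ENNReal.rpow_neg,
    neg_neg] at hmarkov

variable [SecondCountableTopology X]

theorem rieszEnergy_map {α : Type*} [MeasurableSpace α] {s : ℝ} {μ : Measure α} [SFinite μ]
    {g : α → X} (hg : Measurable g) :
    rieszEnergy s (μ.map g) = ∫⁻ x, ∫⁻ y, edist (g x) (g y) ^ (-s) ∂μ ∂μ := by
  have hk : Measurable fun p : X × X ↦ edist p.1 p.2 ^ (-s) := by fun_prop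
  rw [rieszEnergy, lintegral_map hk.lintegral_prod_right' hg]
  congr with x
  exact lintegral_map (hk.comp measurable_prodMk_left) hg

theorem exists_restrict_closedEBall_le_of_rieszEnergy_ne_top {s : ℝ} (hs : 0 ≤ s)
    {μ : Measure X} [SFinite μ] (hμ : μ ≠ 0) (hE : rieszEnergy s μ ≠ ⊤) :
    ∃ E, MeasurableSet E ∧ μ E ≠ 0 ∧
      ∃ C ≠ ⊤, ∀ x ρ, μ.restrict E (closedEBall x ρ) ≤ C * ρ ^ s := by
  set ψ : X → ℝ≥0∞ := fun x ↦ ∫⁻ y, edist x y ^ (-s) ∂μ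
  have hψ : Measurable ψ :=
    (by fun_prop : Measurable fun p : X × X ↦ edist p.1 p.2 ^ (-s)).lintegral_prod_right'
  -- the potential `ψ` is finite a.e., so one of its sublevel sets has positive measure
  have hcover : ⋃ m : ℕ, ψ ⁻¹' Iic m =ᵐ[μ] univ := ae_eq_univ.2 <|
    (ae_lt_top hψ hE).mono fun x hx ↦
      mem_iUnion.2 ((ENNReal.exists_nat_gt hx.ne).imp fun _ ↦ le_of_lt)
  obtain ⟨m, hm⟩ := exists_measure_pos_of_not_measure_iUnion_null
    (by rwa [measure_congr hcover, Measure.measure_univ_ne_zero])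
  refine ⟨_, hψ measurableSet_Iic, hm.ne', (m + 1) * 2 ^ s, by finiteness,
    restrict_closedEBall_le_of_forall_mem hs (hψ measurableSet_Iic) fun x hx ↦ ?_⟩
  exact measure_closedEBall_le_of_lintegral_le hs (by simp) (by simp) (le_add_right hx)

end RieszEnergy

theorem le_dimH_of_measure_closedEBall_le {X : Type*} [EMetricSpace X] [MeasurableSpace X]
    [BorelSpace X] {μ : Measure X} {d : ℝ} (hd : 0 ≤ d) {C : ℝ≥0∞} (hC : C ≠ ⊤)
    (h : ∀ x ρ, μ (closedEBall x ρ) ≤ C * ρ ^ d) {S : Set X} (hS : μ S ≠ 0) :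
    ENNReal.ofReal d ≤ dimH S := by
  have hle : C⁻¹ • μ ≤ μH[d] := by
    refine Measure.le_hausdorffMeasure d _ 1 one_pos fun t _ ↦ ?_
    rcases t.eq_empty_or_nonempty with rfl | ⟨x, hx⟩
    · simp
    rcases eq_or_ne C 0 with rfl | hC0
    · have : μ t = 0 := by
        simpa using (measure_mono fun y hy ↦ edist_le_ediam_of_mem hy hx).trans (h x (ediam t))
      simp [this]
    rw [Measure.smul_apply, smul_eq_mul, ENNReal.inv_mul_le_iff hC0 hC]
    exact (measure_mono fun y hy ↦ edist_le_ediam_of_mem hy hx).trans (h x _)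
  refine le_dimH_of_hausdorffMeasure_ne_zero (d := d.toNNReal) ?_
  rw [Real.coe_toNNReal d hd]
  refine fun h0 ↦ mul_ne_zero (ENNReal.inv_ne_zero.2 hC) hS (nonpos_iff_eq_zero.1 ?_)
  simpa [h0] using hle S

theorem MeasureTheory.Measure.prod_closedEBall_le {X Y : Type*} [PseudoEMetricSpace X]
    [PseudoEMetricSpace Y] [MeasurableSpace X] [MeasurableSpace Y] {μ : Measure X}
    {ν : Measure Y} [SFinite ν] {a b : ℝ} (ha : 0 ≤ a) (hb : 0 ≤ b) {C D : ℝ≥0∞}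
    (hμ : ∀ x ρ, μ (closedEBall x ρ) ≤ C * ρ ^ a) (hν : ∀ y ρ, ν (closedEBall y ρ) ≤ D * ρ ^ b)
    (z : X × Y) (ρ : ℝ≥0∞) : μ.prod ν (closedEBall z ρ) ≤ C * D * ρ ^ (a + b) := by
  rw [← closedEBall_prod_same, Measure.prod_prod, ENNReal.rpow_add_of_nonneg _ _ ha hb]
  calc μ (closedEBall z.1 ρ) * ν (closedEBall z.2 ρ) ≤ C * ρ ^ a * (D * ρ ^ b) :=
        mul_le_mul' (hμ _ _) (hν _ _)
    _ = C * D * (ρ ^ a * ρ ^ b) := by ring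

theorem ofReal_add_one_le_dimH_image_prod {α X : Type*} [MeasurableSpace α] [EMetricSpace X]
    [MeasurableSpace X] [BorelSpace X] [SecondCountableTopology X] {μ : Measure α} [SFinite μ]
    {g : α → X} (hg : Measurable g) {T : Set α} (hT : MeasurableSet T) (hT0 : μ T ≠ 0)
    {s : ℝ} (hs : 0 ≤ s) (hE : rieszEnergy s ((μ.restrict T).map g) ≠ ⊤) {I : Set ℝ}
    (hI : volume I ≠ 0) :
    ENNReal.ofReal (s + 1) ≤ dimH ((g '' T) ×ˢ I) := by
  set ν := (μ.restrict T).map g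
  have hν : ν ≠ 0 := by
    rwa [← Measure.measure_univ_ne_zero, Measure.map_apply hg .univ, preimage_univ,
      Measure.restrict_apply_univ]
  obtain ⟨E, hEm, hνE, C, hC, hball⟩ :=
    exists_restrict_closedEBall_le_of_rieszEnergy_ne_top hs hν hE
  have hI_ball : ∀ y ρ, volume.restrict I (closedEBall y ρ) ≤ 2 * ρ ^ (1 : ℝ) := fun y ρ ↦ by
    rw [ENNReal.rpow_one, ← Real.volume_closedEBall]; exact Measure.restrict_le_self _
  refine le_dimH_of_measure_closedEBall_le (by positivity) (by finiteness)
    (Measure.prod_closedEBall_le hs zero_le_one hball hI_ball) ?_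
  rw [Measure.prod_prod, Measure.restrict_apply_self]
  refine mul_ne_zero (ne_bot_of_le_ne_bot hνE ?_) hI
  -- `ν` is carried by `g '' T`, although that set need not be measurable
  calc ν E = μ.restrict T (g ⁻¹' E ∩ T) := by
        rw [Measure.map_apply hg hEm, Measure.restrict_apply ((hg hEm).inter hT), inter_assoc,
          inter_self, Measure.restrict_apply (hg hEm)]
    _ ≤ ν (g '' (g ⁻¹' E ∩ T)) := Measure.le_map_apply_image hg.aemeasurable _
    _ ≤ ν.restrict E (g '' T) := by
        rw [Measure.restrict_apply' hEm, inter_comm, ← image_inter_preimage]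

theorem rieszEnergy_volume_restrict_ne_top {s : ℝ} (hs0 : 0 ≤ s) (hs1 : s < 1) {T : Set ℝ}
    (hT : volume T ≠ ⊤) : rieszEnergy s (volume.restrict T) ≠ ⊤ := by
  refine ne_top_of_le_ne_top (b := ENNReal.ofReal (3 / (1 - s)) * volume T ^ (1 - s) * volume T)
    (by finiteness) ?_
  calc rieszEnergy s (volume.restrict T)
      ≤ ∫⁻ _ in T, ENNReal.ofReal (3 / (1 - s)) * volume T ^ (1 - s) := lintegral_mono fun x ↦ by
        refine (le_of_eq ?_).trans (setLIntegral_enorm_add_rpow_neg_le hs0 hs1 (-x) T)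
        simp_rw [edist_comm x, edist_eq_enorm_sub, neg_add_eq_sub]
    _ = _ := setLIntegral_const _ _

section AffineFamily

variable {s : ℝ} {a : ℝ → ℝ}

theorem measurable_rieszEnergy_map_add_mul (ha : Measurable a) (μ : Measure ℝ) [SFinite μ] :
    Measurable fun r ↦ rieszEnergy s (μ.map fun t ↦ a t + r * t) := by
  have hmap (r : ℝ) :=
    rieszEnergy_map (s := s) (μ := μ) (by fun_prop : Measurable fun t ↦ a t + r * t)
  simp_rw [hmap]
  have hk : Measurable fun q : (ℝ × ℝ) × ℝ ↦
      edist (a q.1.2 + q.1.1 * q.1.2) (a q.2 + q.1.1 * q.2) ^ (-s) := by fun_prop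
  exact hk.lintegral_prod_right'.lintegral_prod_right'

theorem lintegral_rieszEnergy_map_add_mul_le (hs0 : 0 < s) (hs1 : s < 1) (ha : Measurable a)
    (μ : Measure ℝ) [SFinite μ] (A : Set ℝ) :
    ∫⁻ r in A, rieszEnergy s (μ.map fun t ↦ a t + r * t) ≤
      ENNReal.ofReal (3 / (1 - s)) * volume A ^ (1 - s) * rieszEnergy s μ := by
  have hk : Measurable fun q : ℝ × ℝ × ℝ ↦
      edist (a q.2.1 + q.1 * q.2.1) (a q.2.2 + q.1 * q.2.2) ^ (-s) := by fun_prop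
  calc ∫⁻ r in A, rieszEnergy s (μ.map fun t ↦ a t + r * t)
      = ∫⁻ r in A, ∫⁻ p, edist (a p.1 + r * p.1) (a p.2 + r * p.2) ^ (-s) ∂μ.prod μ := by
        congr with r
        rw [rieszEnergy_map (by fun_prop), lintegral_prod _ (by fun_prop)]
    _ = ∫⁻ p, (∫⁻ r in A, edist (a p.1 + r * p.1) (a p.2 + r * p.2) ^ (-s)) ∂μ.prod μ :=
        lintegral_lintegral_swap hk.aemeasurable
    _ ≤ ∫⁻ p, ENNReal.ofReal (3 / (1 - s)) * volume A ^ (1 - s) * edist p.1 p.2 ^ (-s) ∂μ.prod μ :=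
        lintegral_mono fun p ↦ by
          simp_rw [edist_eq_enorm_sub]
          convert setLIntegral_enorm_add_mul_rpow_neg_le hs0 hs1 (a p.1 - a p.2) (p.1 - p.2) A
            using 4
          congr 1
          ring
    _ = ENNReal.ofReal (3 / (1 - s)) * volume A ^ (1 - s) * rieszEnergy s μ := by
        rw [lintegral_const_mul _ (by fun_prop), rieszEnergy, lintegral_prod _ (by fun_prop)]

theorem ae_rieszEnergy_map_add_mul_ne_top (hs0 : 0 < s) (hs1 : s < 1) (ha : Measurable a)
    {μ : Measure ℝ} [SFinite μ] (hμ : rieszEnergy s μ ≠ ⊤) :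
    ∀ᵐ r, rieszEnergy s (μ.map fun t ↦ a t + r * t) ≠ ⊤ := by
  have : ∀ᵐ r ∂volume.restrict (⋃ n : ℤ, Icc (n : ℝ) (n + 1)),
      rieszEnergy s (μ.map fun t ↦ a t + r * t) ≠ ⊤ := by
    refine (ae_restrict_iUnion_iff _ _).2 fun n ↦ ?_
    refine (ae_lt_top' (measurable_rieszEnergy_map_add_mul ha μ).aemeasurable ?_).mono
      fun _ ↦ LT.lt.ne
    refine ne_top_of_le_ne_top ?_ (lintegral_rieszEnergy_map_add_mul_le hs0 hs1 ha μ _)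
    simpa using ENNReal.mul_ne_top ofReal_ne_top hμ
  rwa [iUnion_Icc_intCast, Measure.restrict_univ] at this

end AffineFamily

theorem exists_measure_preimage_Icc_ne_zero {α : Type*} [MeasurableSpace α] {μ : Measure α}
    (hμ : μ ≠ 0) (b : α → ℝ) {δ : ℝ} (hδ : 0 < δ) : ∃ c, μ (b ⁻¹' Icc c (c + δ)) ≠ 0 := by
  have hcover : univ ⊆ ⋃ n : ℤ, b ⁻¹' Icc (n • δ) (n • δ + δ) := by
    rw [← preimage_iUnion, ← preimage_univ (f := b), ← iUnion_Ico_zsmul hδ]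
    exact preimage_mono (iUnion_mono fun n ↦ by rw [add_one_zsmul]; exact Ico_subset_Icc_self)
  obtain ⟨n, hn⟩ := exists_measure_pos_of_not_measure_iUnion_null
    (ne_bot_of_le_ne_bot (Measure.measure_univ_ne_zero.2 hμ) (measure_mono hcover))
  exact ⟨_, hn.ne'⟩

theorem norm_prodMk_add_sub_eq {x : ℝ × ℝ} {ρ u : ℝ} (hρ : 0 ≤ ρ) (hu : |u - x.2| ≤ ρ) :
    ‖((x.1 + ρ, u) : ℝ × ℝ) - x‖ = ρ := by
  simp [Prod.norm_def, abs_of_nonneg hρ, hu]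

theorem image_prod_subset_shrunk (f : ℝ → ℝ × ℝ) {r c δ : ℝ} (hr : 0 < r) (hδ : δ ≤ r / 4) :
    ((fun t ↦ (f t).1 + 2⁻¹ * r * t) '' ((f · |>.2) ⁻¹' Icc c (c + δ) ∩ Ioo (1 / 2) 1)) ×ˢ
        Icc c (c + δ) ⊆ ⋃ t ∈ Ioo (0 : ℝ) 1, {y : ℝ × ℝ | ‖y - f t‖ = r * t / 2} := by
  rintro ⟨_, u⟩ ⟨⟨t, ⟨htb, ht⟩, rfl⟩, hu⟩
  refine mem_iUnion₂.2 ⟨t, ⟨by linarith [ht.1], ht.2⟩, ?_⟩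
  have hside : |u - (f t).2| ≤ r * t / 2 := by
    rw [abs_sub_le_iff]; constructor <;> nlinarith [htb.1, htb.2, hu.1, hu.2, ht.1]
  show ‖((f t).1 + 2⁻¹ * r * t, u) - f t‖ = r * t / 2
  rw [show 2⁻¹ * r * t = r * t / 2 by ring]
  exact norm_prodMk_add_sub_eq (by nlinarith [ht.1]) hside

theorem ofReal_add_one_le_dimH_shrunk (f : ℝ → ℝ × ℝ) (hf : Measurable f) {r : ℝ} (hr : 0 < r)
    {s : ℝ} (hs : 0 ≤ s)
    (hE : rieszEnergy s ((volume.restrict (Ioo (1 / 2) 1)).map fun t ↦ (f t).1 + 2⁻¹ * r * t) ≠ ⊤) :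
    ENNReal.ofReal (s + 1) ≤ dimH (⋃ t ∈ Ioo (0 : ℝ) 1, {y : ℝ × ℝ | ‖y - f t‖ = r * t / 2}) := by
  obtain ⟨c, hc⟩ := exists_measure_preimage_Icc_ne_zero (μ := volume.restrict (Ioo (1 / 2) 1))
    (by simp; norm_num) (f · |>.2) (by linarith : 0 < r / 4)
  rw [Measure.restrict_apply (hf.snd measurableSet_Icc)] at hc
  set T := (f · |>.2) ⁻¹' Icc c (c + r / 4) ∩ Ioo (1 / 2) 1
  have hET : rieszEnergy s ((volume.restrict T).map fun t ↦ (f t).1 + 2⁻¹ * r * t) ≠ ⊤ :=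
    ne_top_of_le_ne_top hE <| rieszEnergy_mono <|
      Measure.map_mono (Measure.restrict_mono inter_subset_right le_rfl) (by fun_prop)
  exact (ofReal_add_one_le_dimH_image_prod (by fun_prop) ((hf.snd measurableSet_Icc).inter
    measurableSet_Ioo) hc hs hET (I := Icc c (c + r / 4)) (by simp; linarith)).trans
    (dimH_mono (image_prod_subset_shrunk f hr le_rfl))

theorem shrunk_cube_packing_dimH_general (f : ℝ → ℝ × ℝ) (hf : Measurable f) :
    ∀ᵐ r : ℝ, r ∈ Set.Ioo (0:ℝ) 1 →
      dimH (⋃ t ∈ Set.Ioo (0:ℝ) 1, {y : ℝ × ℝ | ‖y - f t‖ = r * t / 2}) = 2 := by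
  obtain ⟨s, -, hs, hs_lim⟩ := exists_seq_strictMono_tendsto' (zero_lt_one' ℝ)
  have hE : ∀ᵐ r, ∀ n, rieszEnergy (s n)
      ((volume.restrict (Ioo (1 / 2) 1)).map fun t ↦ (f t).1 + 2⁻¹ * r * t) ≠ ⊤ :=
    ae_all_iff.2 fun n ↦ (Measure.quasiMeasurePreserving_smul volume (by norm_num)).ae
      (ae_rieszEnergy_map_add_mul_ne_top (hs n).1 (hs n).2 hf.fst
        (rieszEnergy_volume_restrict_ne_top (hs n).1.le (hs n).2 (by simp)))
  have hlim : Tendsto (fun n ↦ ENNReal.ofReal (s n + 1)) atTop (𝓝 2) := by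
    simpa [one_add_one_eq_two] using ENNReal.tendsto_ofReal (hs_lim.add_const 1)
  filter_upwards [hE] with r hr hr01
  refine le_antisymm ((dimH_mono (subset_univ _)).trans_eq ?_) (le_of_tendsto' hlim fun n ↦
    ofReal_add_one_le_dimH_shrunk f hf hr01.1 (hs n).1.le (hr n))
  rw [Real.dimH_univ_eq_finrank, Module.finrank_prod, Module.finrank_self]; norm_num

/-- For a Borel size cube packing `f : (0,1) → [0,1]²`, the shrunk sets
`G_r` have full Hausdorff dimension `2` for almost every ratio `r ∈ (0,1)`. -/
theorem shrunk_cube_packing_dimH (f : ℝ → ℝ × ℝ) (hf : Measurable f)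
    (hrange : ∀ t ∈ Set.Ioo (0:ℝ) 1, f t ∈ Set.Icc (0:ℝ) 1 ×ˢ Set.Icc (0:ℝ) 1) :
    ∀ᵐ r : ℝ, r ∈ Set.Ioo (0:ℝ) 1 →
      dimH (⋃ t ∈ Set.Ioo (0:ℝ) 1, {y : ℝ × ℝ | ‖y - f t‖ = r * t / 2}) = 2 :=
  shrunk_cube_packing_dimH_general f hf
end
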